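/- arXiv:1403.1654 — 6 statements merged into one kernel-verified Lean document; each statement's English description precedes it below -/
import Mathlib

section
/- Let m ≥ 1 and let α, β, γ₁, …, γ_m be nonzero complex numbers with γ_k ≠ 1 for all k, β ≠ 1, and α ≠ ∏_k γ_k. Then the sum over all subsets I of {1,…,m} of (−1)^{|I|} · [∏_{j∉I} γ_j · (α − ∏_{i∈I} γ_i)(β − ∏_{i∈I} γ_i)] / [∏_{k=1}^m (γ_k − 1) · (α − ∏_{k=1}^m γ_k)(β − 1)] equals (αβ + (−1)^m ∏_{k=1}^m γ_k) / ((β−1)(α − ∏_{k=1}^m γ_k)). -/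
/-!
Write `x_I = ∏_{i ∈ I} γ_i` and expand `(α - x_I)(β - x_I) = αβ - (α + β) x_I + x_I²`.
By `Finset.prod_add`, the alternating sum `∑_I (-1)^|I| (∏_{j ∉ I} γ_j) x_I^n` factors as
`∏_k (γ_k - γ_k^n)`, which is `∏_k (γ_k - 1)`, `0` and `(-1)^m ∏_k γ_k ∏_k (γ_k - 1)` for
`n = 0, 1, 2`. Hence the numerator is `(αβ + (-1)^m ∏_k γ_k) ∏_k (γ_k - 1)`, and the factor
`∏_k (γ_k - 1)` cancels against the denominator.
-/

open Finset

variable {ι R : Type*} [DecidableEq ι] [CommRing R]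

theorem sum_powerset_neg_one_pow_mul_prod_sdiff_mul_prod_pow (s : Finset ι) (γ : ι → R) (n : ℕ) :
    ∑ I ∈ s.powerset, (-1) ^ #I * ((∏ j ∈ s \ I, γ j) * (∏ i ∈ I, γ i) ^ n)
      = ∏ k ∈ s, (γ k - γ k ^ n) := by
  rw [show ∏ k ∈ s, (γ k - γ k ^ n) = ∏ k ∈ s, (-γ k ^ n + γ k) from
    prod_congr rfl fun k _ => by ring, prod_add]
  refine sum_congr rfl fun I _ => ?_
  rw [prod_neg, prod_pow]
  ring

theorem sum_powerset_neg_one_pow_mul_prod_sdiff_mul_sub_mul_sub (s : Finset ι) (hs : s.Nonempty)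
    (γ : ι → R) (a b : R) :
    ∑ I ∈ s.powerset,
        (-1) ^ #I * ((∏ j ∈ s \ I, γ j) * ((a - ∏ i ∈ I, γ i) * (b - ∏ i ∈ I, γ i)))
      = (∏ k ∈ s, (γ k - 1)) * (a * b + (-1) ^ #s * ∏ k ∈ s, γ k) := by
  set T : ℕ → Finset ι → R := fun n I => (-1) ^ #I * ((∏ j ∈ s \ I, γ j) * (∏ i ∈ I, γ i) ^ n)
  have hsum (n : ℕ) : ∑ I ∈ s.powerset, T n I = ∏ k ∈ s, (γ k - γ k ^ n) :=
    sum_powerset_neg_one_pow_mul_prod_sdiff_mul_prod_pow s γ n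
  have hT1 : ∏ k ∈ s, (γ k - γ k ^ 1) = 0 :=
    prod_eq_zero hs.choose_spec (by rw [pow_one, sub_self])
  have hT2 : ∏ k ∈ s, (γ k - γ k ^ 2) = (-1) ^ #s * (∏ k ∈ s, γ k) * ∏ k ∈ s, (γ k - 1) := by
    rw [← prod_const, ← prod_mul_distrib, ← prod_mul_distrib]
    exact prod_congr rfl fun k _ => by ring
  calc ∑ I ∈ s.powerset,
        (-1) ^ #I * ((∏ j ∈ s \ I, γ j) * ((a - ∏ i ∈ I, γ i) * (b - ∏ i ∈ I, γ i)))
      = ∑ I ∈ s.powerset, (a * b * T 0 I - (a + b) * T 1 I + T 2 I) :=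
        sum_congr rfl fun I _ => by simp only [T]; ring
    _ = (∏ k ∈ s, (γ k - 1)) * (a * b + (-1) ^ #s * ∏ k ∈ s, γ k) := by
        rw [sum_add_distrib, sum_sub_distrib, ← mul_sum, ← mul_sum, hsum, hsum, hsum, hT1, hT2]
        simp only [pow_zero]
        ring

theorem stmt5_general (m : ℕ) (hm : 1 ≤ m) (α β : ℂ) (γ : Fin m → ℂ)
    (hγ1 : ∀ k, γ k ≠ 1) :
    ∑ I ∈ (Finset.univ : Finset (Fin m)).powerset,
      (-1 : ℂ) ^ I.card *
        ((∏ j ∈ Iᶜ, γ j) * ((α - ∏ i ∈ I, γ i) * (β - ∏ i ∈ I, γ i))) /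
        ((∏ k, (γ k - 1)) * ((α - ∏ k, γ k) * (β - 1)))
      = (α * β + (-1 : ℂ) ^ m * ∏ k, γ k) / ((β - 1) * (α - ∏ k, γ k)) := by
  have hne : (univ : Finset (Fin m)).Nonempty := univ_nonempty_iff.mpr ⟨⟨0, hm⟩⟩
  have hQ : ∏ k, (γ k - 1) ≠ 0 := prod_ne_zero_iff.mpr fun k _ => sub_ne_zero.mpr (hγ1 k)
  simp_rw [← sum_div, compl_eq_univ_sdiff]
  rw [sum_powerset_neg_one_pow_mul_prod_sdiff_mul_sub_mul_sub _ hne, card_univ, Fintype.card_fin,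
    mul_div_mul_left _ _ hQ, mul_comm (α - _)]

theorem stmt5 (m : ℕ) (hm : 1 ≤ m) (α β : ℂ) (γ : Fin m → ℂ)
    (hα0 : α ≠ 0) (hβ0 : β ≠ 0) (hγ0 : ∀ k, γ k ≠ 0)
    (hγ1 : ∀ k, γ k ≠ 1) (hβ1 : β ≠ 1) (hα : α ≠ ∏ k, γ k) :
    ∑ I ∈ (Finset.univ : Finset (Fin m)).powerset,
      (-1 : ℂ) ^ I.card *
        ((∏ j ∈ Iᶜ, γ j) * ((α - ∏ i ∈ I, γ i) * (β - ∏ i ∈ I, γ i))) /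
        ((∏ k, (γ k - 1)) * ((α - ∏ k, γ k) * (β - 1)))
      = (α * β + (-1 : ℂ) ^ m * ∏ k, γ k) / ((β - 1) * (α - ∏ k, γ k)) :=
  stmt5_general m hm α β γ hγ1
end

section
/- Let m ≥ 1 and let α, β, γ₁, …, γ_m be nonzero complex numbers such that all the denominators appearing below are nonzero. For any proper subset N ⊊ {1,…,m}, the following identity holds: [∏_{n∈N} γ_n / ((α − ∏_{n∈N} γ_n)(β − ∏_{n∈N} γ_n))] · ( (α − ∏_{k} γ_k)(β − ∏_{k} γ_k)/∏_{k} γ_k + Σ_{I : N ⊆ I ⊊ {1,…,m}} ∏_{j∉I}(γ_j − 1) · ( αβ/∏_k γ_k + (−1)^{m−|I|} ∏_{i∈I} γ_i ) ) = 1. -/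
/-!
Summing over the supersets `I ⊇ N` (including `I = univ`) and expanding the bracket, each of the
two resulting sums is a binomial expansion `∏_{j ∉ N} (x_j + y_j)`: one with `x_j = γ_j - 1`,
`y_j = 1`, giving `∏_{j ∉ N} γ_j = P / G`, the other with `x_j = 1 - γ_j`, `y_j = γ_j` (after
absorbing the sign `(-1)^{|Iᶜ|}`), giving `1`. Here `P = ∏_k γ_k` and `G = ∏_{n ∈ N} γ_n`.
Hence the bracket equals `(α - P)(β - P)/P + αβ/G + G - (αβ/P + P) = (α - G)(β - G)/G`.
-/

open Finset

lemma neg_one_pow_card_mul_prod_sub_one {ι R : Type*} [CommRing R] (s : Finset ι) (f : ι → R) :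
    (-1) ^ #s * ∏ j ∈ s, (f j - 1) = ∏ j ∈ s, (1 - f j) := by
  rw [← prod_neg]
  simp

section Supersets

variable {ι R : Type*} [Fintype ι] [DecidableEq ι]

lemma sum_filter_superset_ne_univ [AddCommGroup R] (N : Finset ι) (f : Finset ι → R) :
    ∑ I ∈ (univ : Finset ι).powerset.filter (fun I => N ⊆ I ∧ I ≠ univ), f I
      = ∑ I ∈ (univ : Finset ι).powerset.filter (N ⊆ ·), f I - f univ := by
  rw [← sum_erase_eq_sub (by simp)]
  congr 1
  ext I
  simp [and_comm]

lemma sum_superset_prod_compl_mul_prod_sdiff [CommSemiring R] (N : Finset ι) (f g : ι → R) :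
    ∑ I ∈ (univ : Finset ι).powerset.filter (N ⊆ ·), (∏ j ∈ Iᶜ, f j) * ∏ i ∈ I \ N, g i
      = ∏ j ∈ Nᶜ, (f j + g j) := by
  rw [prod_add]
  refine sum_nbij' compl compl ?_ ?_ ?_ ?_ ?_ <;>
    simp [subset_compl_comm, sdiff_eq_inter_compl, inter_comm]

lemma sum_superset_prod_compl_sub_one_mul [CommRing R] (N : Finset ι) (γ : ι → R) (c : R) :
    ∑ I ∈ (univ : Finset ι).powerset.filter (N ⊆ ·),
        (∏ j ∈ Iᶜ, (γ j - 1)) * (c + (-1) ^ #Iᶜ * ∏ i ∈ I, γ i)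
      = c * ∏ j ∈ Nᶜ, γ j + ∏ n ∈ N, γ n := by
  have hsummand : ∀ I ∈ (univ : Finset ι).powerset.filter (N ⊆ ·),
      (∏ j ∈ Iᶜ, (γ j - 1)) * (c + (-1) ^ #Iᶜ * ∏ i ∈ I, γ i)
        = c * ((∏ j ∈ Iᶜ, (γ j - 1)) * ∏ _i ∈ I \ N, 1)
          + (∏ n ∈ N, γ n) * ((∏ j ∈ Iᶜ, (1 - γ j)) * ∏ i ∈ I \ N, γ i) := by
    intro I hI
    rw [← prod_sdiff (mem_filter.mp hI).2, ← neg_one_pow_card_mul_prod_sub_one]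
    simp only [prod_const_one]
    ring
  rw [sum_congr rfl hsummand, sum_add_distrib, ← mul_sum, ← mul_sum,
    sum_superset_prod_compl_mul_prod_sdiff, sum_superset_prod_compl_mul_prod_sdiff]
  simp

end Supersets

theorem stmt6_general (m : ℕ) (α β : ℂ) (γ : Fin m → ℂ)
    (hγ0 : ∀ k, γ k ≠ 0)
    (N : Finset (Fin m))
    (hαN : α ≠ ∏ n ∈ N, γ n) (hβN : β ≠ ∏ n ∈ N, γ n) :
    ((∏ n ∈ N, γ n) / ((α - ∏ n ∈ N, γ n) * (β - ∏ n ∈ N, γ n))) *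
      ((α - ∏ k, γ k) * (β - ∏ k, γ k) / (∏ k, γ k) +
        ∑ I ∈ (Finset.univ : Finset (Fin m)).powerset.filter
            (fun I => N ⊆ I ∧ I ≠ Finset.univ),
          (∏ j ∈ Iᶜ, (γ j - 1)) *
            (α * β / (∏ k, γ k) + (-1 : ℂ) ^ (m - I.card) * ∏ i ∈ I, γ i))
      = 1 := by
  have hcard : ∀ I : Finset (Fin m), m - #I = #Iᶜ := by simp [card_compl]
  simp only [hcard]
  rw [sum_filter_superset_ne_univ, sum_superset_prod_compl_sub_one_mul]
  simp only [compl_univ, prod_empty, card_empty, pow_zero, one_mul]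
  rw [← prod_mul_prod_compl N γ]
  have hG : ∏ n ∈ N, γ n ≠ 0 := prod_ne_zero_iff.mpr fun k _ => hγ0 k
  have hQ : ∏ j ∈ Nᶜ, γ j ≠ 0 := prod_ne_zero_iff.mpr fun k _ => hγ0 k
  have hαG : α - ∏ n ∈ N, γ n ≠ 0 := sub_ne_zero.mpr hαN
  have hβG : β - ∏ n ∈ N, γ n ≠ 0 := sub_ne_zero.mpr hβN
  field_simp
  ring

theorem stmt6 (m : ℕ) (hm : 1 ≤ m) (α β : ℂ) (γ : Fin m → ℂ)
    (hα0 : α ≠ 0) (hβ0 : β ≠ 0) (hγ0 : ∀ k, γ k ≠ 0)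
    (N : Finset (Fin m)) (hN : N ≠ Finset.univ)
    (hαN : α ≠ ∏ n ∈ N, γ n) (hβN : β ≠ ∏ n ∈ N, γ n) :
    ((∏ n ∈ N, γ n) / ((α - ∏ n ∈ N, γ n) * (β - ∏ n ∈ N, γ n))) *
      ((α - ∏ k, γ k) * (β - ∏ k, γ k) / (∏ k, γ k) +
        ∑ I ∈ (Finset.univ : Finset (Fin m)).powerset.filter
            (fun I => N ⊆ I ∧ I ≠ Finset.univ),
          (∏ j ∈ Iᶜ, (γ j - 1)) *
            (α * β / (∏ k, γ k) + (-1 : ℂ) ^ (m - I.card) * ∏ i ∈ I, γ i))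
      = 1 :=
  stmt6_general m α β γ hγ0 N hαN hβN
end

section
/- Let m ≥ 2 and let r₁, …, r_{m−1} be positive reals with r₁ < 1/4 and r_k < r_{k−1}/4 for 2 ≤ k ≤ m−1. For a = (a₁,…,a_{m−1}) ∈ {0,1}^{m−1} define t_a := (1 + Σ_{k=1}^{m−1} (−1)^{a_k} √r_k)². Then t_a < t_{a'} if and only if the binary integer a₁a₂⋯a_{m−1} is strictly greater than the binary integer a'₁a'₂⋯a'_{m−1}. -/
/-! The weights `√r_k` shrink by more than a factor of two from one index to the next, so each of
them exceeds the sum of all later ones; the same holds for the binary place values `2 ^ (m - 2 - k)`.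
For such weights the weighted digit sum `∑ a_k w_k` is strictly monotone in the lexicographic order
of the digit vector `a`, so comparing `∑ a_k √r_k` is the same as comparing binary integers. Finally
`1 + ∑ (-1)^{a_k} √r_k = 1 + ∑ √r_k - 2 ∑ a_k √r_k` is positive because `∑ √r_k < 2 √r_1 < 1`,
and squaring preserves the order. -/

open Finset

lemma sum_univ_eq_sum_lt_add_add_sum_gt {ι M : Type*} [Fintype ι] [LinearOrder ι] [AddCommMonoid M]
    (f : ι → M) (i : ι) :
    ∑ k, f k = ∑ k with k < i, f k + f i + ∑ k with i < k, f k := by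
  have hge : univ.filter (fun k => ¬k < i) = insert i (univ.filter (i < ·)) := by
    ext k
    simp only [mem_filter, mem_univ, true_and, not_lt, mem_insert]
    exact le_iff_eq_or_lt.trans (or_congr_left eq_comm)
  rw [← sum_filter_add_sum_filter_not univ (· < i), hge, sum_insert (by simp), add_assoc]

section DigitSums

variable {ι M : Type*} [AddCommMonoid M] [PartialOrder M] [IsOrderedCancelAddMonoid M]

lemma nsmul_le_self_of_fin_two (b : Fin 2) {x : M} (hx : 0 ≤ x) : (b : ℕ) • x ≤ x := by
  simpa using nsmul_le_nsmul_left hx (Nat.lt_succ_iff.mp b.isLt)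

lemma Fin.sum_gt_lt_of_add_self_le {n : ℕ} (w : Fin n → M) (hw : ∀ i, 0 < w i)
    (hhalf : ∀ i j : Fin n, (i : ℕ) + 1 = j → w j + w j ≤ w i) (i : Fin n) :
    ∑ j with i < j, w j < w i := by
  obtain _ | n := n
  · exact i.elim0
  induction i using Fin.reverseInduction with
  | last =>
    rw [filter_false_of_mem fun j _ => not_lt.mpr (Fin.le_last j), sum_empty]
    exact hw _
  | cast i ih =>
    have hgt : univ.filter (i.castSucc < ·) = insert i.succ (univ.filter (i.succ < ·)) := by
      ext j
      simp only [mem_filter, mem_univ, true_and, mem_insert, Fin.lt_def, Fin.ext_iff,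
        Fin.val_castSucc, Fin.val_succ]
      omega
    rw [hgt, sum_insert (by simp)]
    calc w i.succ + ∑ j with i.succ < j, w j < w i.succ + w i.succ := by gcongr
      _ ≤ w i.castSucc := hhalf _ _ (by simp)

lemma strictMono_lex_sum_nsmul [Fintype ι] [LinearOrder ι] (w : ι → M) (hw : ∀ i, 0 ≤ w i)
    (hsuper : ∀ i, ∑ j with i < j, w j < w i) :
    StrictMono fun b : Lex (ι → Fin 2) => ∑ k, (ofLex b k : ℕ) • w k := by
  intro a b hab
  obtain ⟨i, hpre, hi⟩ := hab
  have hi' : (ofLex a i : ℕ) < ofLex b i := hi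
  have hai : (ofLex a i : ℕ) = 0 := by omega
  have hbi : (ofLex b i : ℕ) = 1 := by have := (ofLex b i).isLt; omega
  have hlow : ∑ k with k < i, (ofLex a k : ℕ) • w k = ∑ k with k < i, (ofLex b k : ℕ) • w k :=
    sum_congr rfl fun k hk => by rw [show ofLex a k = ofLex b k from hpre k (by simpa using hk)]
  have hhigh : ∑ k with i < k, (ofLex a k : ℕ) • w k ≤ ∑ k with i < k, w k :=
    sum_le_sum fun k _ => nsmul_le_self_of_fin_two _ (hw k)
  dsimp only
  rw [sum_univ_eq_sum_lt_add_add_sum_gt _ i, sum_univ_eq_sum_lt_add_add_sum_gt _ i, hlow, hai, hbi,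
    zero_nsmul, one_nsmul, add_zero, add_assoc]
  gcongr _ + ?_
  calc ∑ k with i < k, (ofLex a k : ℕ) • w k < w i := hhigh.trans_lt (hsuper i)
    _ ≤ w i + ∑ k with i < k, (ofLex b k : ℕ) • w k :=
      le_add_of_nonneg_right (sum_nonneg fun k _ => nsmul_nonneg (hw k) _)

end DigitSums

lemma neg_one_pow_fin_two_mul {R : Type*} [CommRing R] (b : Fin 2) (x : R) :
    (-1) ^ (b : ℕ) * x = x - 2 * ((b : ℕ) • x) := by
  fin_cases b <;> simp; ring

theorem stmt10 (m : ℕ) (hm : 2 ≤ m) (r : Fin (m - 1) → ℝ)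
    (hr : ∀ k, 0 < r k)
    (hr1 : ∀ k : Fin (m - 1), (k : ℕ) = 0 → r k < 1 / 4)
    (hrk : ∀ k j : Fin (m - 1), (j : ℕ) + 1 = (k : ℕ) → r k < r j / 4)
    (a a' : Fin (m - 1) → Fin 2) :
    (1 + ∑ k, (-1 : ℝ) ^ ((a k : ℕ)) * Real.sqrt (r k)) ^ 2
      < (1 + ∑ k, (-1 : ℝ) ^ ((a' k : ℕ)) * Real.sqrt (r k)) ^ 2
    ↔ (∑ k, (a' k : ℕ) * 2 ^ (m - 2 - (k : ℕ)))
        < (∑ k, (a k : ℕ) * 2 ^ (m - 2 - (k : ℕ))) := by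
  set w : Fin (m - 1) → ℝ := fun k => √(r k)
  have hw : ∀ k, 0 < w k := fun k => Real.sqrt_pos.mpr (hr k)
  have hw_super := Fin.sum_gt_lt_of_add_self_le w hw fun i j hij => by
    rw [← two_mul, Real.le_sqrt (by positivity) (hr i).le, mul_pow, Real.sq_sqrt (hr j).le]
    linarith [hrk j i hij]
  have hplace_super := Fin.sum_gt_lt_of_add_self_le (fun k : Fin (m - 1) => 2 ^ (m - 2 - (k : ℕ)))
    (fun _ => by positivity) fun i j hij => by
      rw [← two_mul, ← pow_succ']
      exact le_of_eq (congrArg _ (by have := j.isLt; omega))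
  have hw_total : ∑ k, w k < 1 := by
    let i₀ : Fin (m - 1) := ⟨0, by omega⟩
    have hw₀ : w i₀ < 1 / 2 := (Real.sqrt_lt' (by norm_num)).mpr (by linarith [hr1 i₀ rfl])
    rw [sum_univ_eq_sum_lt_add_add_sum_gt w i₀,
      filter_false_of_mem fun k _ => show ¬k < i₀ from Nat.not_lt_zero k, sum_empty]
    linarith [hw_super i₀]
  have hsigned (b : Fin (m - 1) → Fin 2) :
      1 + ∑ k, (-1 : ℝ) ^ (b k : ℕ) * √(r k) = 1 + ∑ k, w k - 2 * ∑ k, (b k : ℕ) • w k := by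
    simp only [neg_one_pow_fin_two_mul, sum_sub_distrib, ← mul_sum, w]
    ring
  have hsigned_nonneg (b : Fin (m - 1) → Fin 2) : 0 ≤ 1 + ∑ k, (-1 : ℝ) ^ (b k : ℕ) * √(r k) := by
    have : ∑ k, (b k : ℕ) • w k ≤ ∑ k, w k :=
      sum_le_sum fun k _ => nsmul_le_self_of_fin_two _ (hw k).le
    rw [hsigned]
    linarith
  rw [pow_lt_pow_iff_left₀ (hsigned_nonneg a) (hsigned_nonneg a') two_ne_zero, hsigned, hsigned]
  calc _ ↔ ∑ k, (a' k : ℕ) • w k < ∑ k, (a k : ℕ) • w k := by constructor <;> intro h <;> linarith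
    _ ↔ toLex a' < toLex a := (strictMono_lex_sum_nsmul w (fun k => (hw k).le) hw_super).lt_iff_lt
    _ ↔ _ := (strictMono_lex_sum_nsmul _ (fun _ => by positivity) hplace_super).lt_iff_lt.symm
end

section
/- Let m ≥ 1, let x₁, …, x_m be positive reals with x_j < ε²/m for some 0 < ε < 1/(m+1), let I ⊆ {1,…,m}, J = {1,…,m}∖I, let J₀ be a nonempty subset of J, and suppose s = (s₁,…,s_m) ∈ ℝ^m satisfies s_i < 0 for i ∈ I, s_j > 0 for j ∈ J₀ and s_j < 0 for j ∈ J∖J₀, together with 1 − Σ_{i∈I} s_i − Σ_{j∈J} x_j/s_j < 0. Then at least one j ∈ J₀ satisfies 0 < s_j < m·x_j. -/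
theorem stmt12 (m : ℕ) (hm : 1 ≤ m) (ε : ℝ) (hε0 : 0 < ε)
    (hε1 : ε < 1 / (m + 1)) (x : Fin m → ℝ) (hx : ∀ k, 0 < x k)
    (hxε : ∀ k, x k < ε ^ 2 / m)
    (I J₀ J₁ : Finset (Fin m)) (hJ : Iᶜ = J₀ ∪ J₁)
    (hJd : Disjoint J₀ J₁) (hJ₀ : J₀.Nonempty)
    (s : Fin m → ℝ)
    (hsI : ∀ i ∈ I, s i < 0)
    (hsJ₀ : ∀ j ∈ J₀, 0 < s j)
    (hsJ₁ : ∀ j ∈ J₁, s j < 0)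
    (hineq : 1 - (∑ i ∈ I, s i) - (∑ j ∈ Iᶜ, x j / s j) < 0) :
    ∃ j ∈ J₀, 0 < s j ∧ s j < m * x j := by
  by_contra h
  push_neg at h
  have hm' : (0:ℝ) < m := by exact_mod_cast hm
  -- each term in J₀ is ≤ 1/m
  have hterm : ∀ j ∈ J₀, x j / s j ≤ 1 / m := by
    intro j hj
    have hsj := hsJ₀ j hj
    have hge : (m:ℝ) * x j ≤ s j := h j hj hsj
    have hxj := hx j
    have h1 : x j / s j ≤ x j / ((m:ℝ) * x j) :=
      div_le_div_of_nonneg_left hxj.le (by positivity) hge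
    calc x j / s j ≤ x j / ((m:ℝ) * x j) := h1
      _ = 1 / m := by field_simp
  have hsum0 : ∑ j ∈ J₀, x j / s j ≤ J₀.card * (1 / m) := by
    have := Finset.sum_le_card_nsmul J₀ (fun j => x j / s j) (1 / m) hterm
    simpa [nsmul_eq_mul] using this
  have hcard : (J₀.card : ℝ) ≤ m := by
    exact_mod_cast (J₀.card_le_univ).trans_eq (by simp)
  have hsum0' : ∑ j ∈ J₀, x j / s j ≤ 1 := by
    calc ∑ j ∈ J₀, x j / s j ≤ J₀.card * (1 / m) := hsum0
      _ ≤ m * (1 / m) := by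
          exact mul_le_mul_of_nonneg_right hcard (by positivity)
      _ = 1 := by field_simp
  have hsum1 : ∑ j ∈ J₁, x j / s j ≤ 0 :=
    Finset.sum_nonpos fun j hj => div_nonpos_of_nonneg_of_nonpos (hx j).le (hsJ₁ j hj).le
  have hsumI : ∑ i ∈ I, s i ≤ 0 := Finset.sum_nonpos fun i hi => (hsI i hi).le
  rw [hJ, Finset.sum_union hJd] at hineq
  linarith
end

section
/- Let m ≥ 2 and define f(s'₁,…,s'_{m−1}) := Σ_{l=1}^{m−1} s'_l − m + 1/(1 − Σ_{l=1}^{m−1} 1/(s'_l + m)) on a neighborhood of the origin in ℝ^{m−1}. Then the origin is a critical point of f, f(0) = 0, and the Hessian matrix of f at the origin is positive definite. -/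
/-!
Write `c = n + 1` for the shift and `d(s) = 1 - ∑ 1/(s_l + c)` for the denominator. At the origin
`s_l + c = c` and `d = 1/c`, so every product `p_l = (s_l + c) d` equals `1`. The `l`-th partial
derivative of the potential is `1 - p_l⁻²`, which therefore vanishes there, and its gradient
`2 p_l⁻³ ∇p_l` at the origin is `(2/c)(e_l + ∑_j e_j)`. The Hessian is thus `(2/c)(I + J)` with
`J` the all-ones matrix, whose quadratic form `(2/c)(|v|² + (∑ v_l)²)` is positive definite.
-/

open Filter Topology ContinuousLinearMap

namespace LauricellaPotential

variable {ι : Type*} [Fintype ι]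

noncomputable def denom (c : ℝ) (s : ι → ℝ) : ℝ := 1 - ∑ l, (s l + c)⁻¹

noncomputable def potential (c : ℝ) (s : ι → ℝ) : ℝ := ∑ l, s l - c + (denom c s)⁻¹

noncomputable def partialPotential (c : ℝ) (s : ι → ℝ) (l : ι) : ℝ :=
  1 - ((s l + c) * denom c s)⁻¹ ^ 2

abbrev coord (l : ι) : (ι → ℝ) →L[ℝ] ℝ := proj l

/-- Off this set the inverses in `potential` take the junk value `0`. -/
def IsRegularPoint (c : ℝ) (s : ι → ℝ) : Prop := (∀ l, s l + c ≠ 0) ∧ denom c s ≠ 0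

variable {c : ℝ} {s : ι → ℝ}

theorem hasFDerivAt_shift_inv {l : ι} (hs : s l + c ≠ 0) :
    HasFDerivAt (fun s : ι → ℝ => (s l + c)⁻¹) (-((s l + c) ^ 2)⁻¹ • coord l) s :=
  (hasDerivAt_inv hs).comp_hasFDerivAt s ((coord l).hasFDerivAt.add_const c)

theorem hasFDerivAt_denom (hs : ∀ l, s l + c ≠ 0) :
    HasFDerivAt (denom c) (∑ l, ((s l + c) ^ 2)⁻¹ • coord l) s := by
  refine ((hasFDerivAt_const (1 : ℝ) s).sub
    (HasFDerivAt.fun_sum fun l _ => hasFDerivAt_shift_inv (hs l))).congr_fderiv ?_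
  ext w
  simp

theorem hasFDerivAt_potential (hs : IsRegularPoint c s) :
    HasFDerivAt (potential c) (∑ l, partialPotential c s l • coord l) s := by
  have hsum : HasFDerivAt (fun s : ι → ℝ => ∑ l, s l) (∑ l, coord l) s :=
    HasFDerivAt.fun_sum fun l _ => (coord l).hasFDerivAt
  refine ((hsum.sub_const c).add
    ((hasDerivAt_inv hs.2).comp_hasFDerivAt s (hasFDerivAt_denom hs.1))).congr_fderiv ?_
  ext w
  simp only [← inv_pow, neg_smul, add_apply, sum_apply, proj_apply, neg_apply, smul_apply,
    smul_eq_mul, Finset.mul_sum, partialPotential, mul_inv_rev]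
  rw [← Finset.sum_neg_distrib, ← Finset.sum_add_distrib]
  exact Finset.sum_congr rfl fun i _ => by ring

theorem hasFDerivAt_partialPotential {l : ι} (hs : IsRegularPoint c s) :
    HasFDerivAt (fun s => partialPotential c s l)
      ((2 * ((s l + c) * denom c s)⁻¹ ^ 3) •
        (denom c s • coord l + (s l + c) • ∑ j, ((s j + c) ^ 2)⁻¹ • coord j)) s := by
  have hp := ((coord l).hasFDerivAt.add_const c).mul (hasFDerivAt_denom hs.1)
  refine ((hasFDerivAt_const (1 : ℝ) s).sub
    (((hasDerivAt_inv (mul_ne_zero (hs.1 l) hs.2)).comp_hasFDerivAt s hp).pow 2)).congr_fderiv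
    ?_
  ext w
  simp only [proj_apply, Function.comp_apply, Pi.mul_apply, mul_inv_rev, Nat.add_one_sub_one,
    pow_one, nsmul_eq_mul, Nat.cast_ofNat, ← inv_pow, smul_add, neg_smul, smul_neg, zero_sub,
    neg_add_rev, neg_neg, add_apply, smul_apply, smul_eq_mul, sum_apply]
  ring

theorem IsRegularPoint.eventually (hs : IsRegularPoint c s) :
    ∀ᶠ t in 𝓝 s, IsRegularPoint c t :=
  (eventually_all.2 fun l =>
    ((continuous_apply l).add continuous_const).continuousAt.eventually_ne (hs.1 l)).and
    ((hasFDerivAt_denom hs.1).continuousAt.eventually_ne hs.2)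

theorem IsRegularPoint.fderiv_potential_eventuallyEq (hs : IsRegularPoint c s) :
    fderiv ℝ (potential c) =ᶠ[𝓝 s] fun t => ∑ l, partialPotential c t l • coord l :=
  hs.eventually.mono fun _ ht => (hasFDerivAt_potential ht).fderiv

theorem denom_zero (hc : c = Fintype.card ι + 1) : denom c (0 : ι → ℝ) = c⁻¹ := by
  have hc0 : c ≠ 0 := by rw [hc]; positivity
  simp only [denom, Pi.zero_apply, zero_add, Finset.sum_const, Finset.card_univ, nsmul_eq_mul]
  field_simp
  rw [hc]
  ring

theorem potential_zero (hc : c = Fintype.card ι + 1) : potential c (0 : ι → ℝ) = 0 := by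
  simp [potential, denom_zero hc]

theorem partialPotential_zero (hc : c = Fintype.card ι + 1) (l : ι) :
    partialPotential c (0 : ι → ℝ) l = 0 := by
  have hc0 : c ≠ 0 := by rw [hc]; positivity
  simp [partialPotential, denom_zero hc, hc0]

theorem isRegularPoint_zero (hc : c = Fintype.card ι + 1) :
    IsRegularPoint c (0 : ι → ℝ) := by
  have hc0 : c ≠ 0 := by rw [hc]; positivity
  exact ⟨fun _ => by simpa using hc0, by simpa [denom_zero hc] using hc0⟩

theorem fderiv_potential_zero (hc : c = Fintype.card ι + 1) :
    fderiv ℝ (potential c) (0 : ι → ℝ) = 0 := by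
  have h := hasFDerivAt_potential (isRegularPoint_zero hc)
  simpa [partialPotential_zero hc] using h.fderiv

theorem hasFDerivAt_partialPotential_zero (hc : c = Fintype.card ι + 1) (l : ι) :
    HasFDerivAt (fun s => partialPotential c s l) ((2 / c) • (coord l + ∑ j, coord j)) 0 := by
  have hc0 : c ≠ 0 := by rw [hc]; positivity
  refine (hasFDerivAt_partialPotential (isRegularPoint_zero hc)).congr_fderiv ?_
  ext w
  simp [denom_zero hc, ← Finset.mul_sum]
  field_simp

theorem iteratedFDeriv_two_potential_zero (hc : c = Fintype.card ι + 1) (v : ι → ℝ) :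
    iteratedFDeriv ℝ 2 (potential c) 0 (fun _ => v) =
      2 / c * (∑ l, v l ^ 2 + (∑ l, v l) ^ 2) := by
  have hF := HasFDerivAt.fun_sum (u := Finset.univ) fun l _ =>
    (hasFDerivAt_partialPotential_zero hc l).smul_const (coord l)
  rw [iteratedFDeriv_two_apply, (isRegularPoint_zero hc).fderiv_potential_eventuallyEq.fderiv_eq,
    hF.fderiv]
  simp only [smul_add, sum_apply, smulRight_apply, add_apply, smul_apply, proj_apply, smul_eq_mul]
  simp only [add_mul, Finset.sum_add_distrib, mul_assoc, ← Finset.mul_sum, ← sq]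
  ring

theorem iteratedFDeriv_two_potential_zero_pos (hc : c = Fintype.card ι + 1) {v : ι → ℝ}
    (hv : v ≠ 0) : 0 < iteratedFDeriv ℝ 2 (potential c) 0 (fun _ => v) := by
  obtain ⟨l, hl⟩ := Function.ne_iff.mp hv
  have hsq : 0 < ∑ l, v l ^ 2 :=
    Finset.sum_pos' (fun i _ => sq_nonneg (v i)) ⟨l, Finset.mem_univ l, sq_pos_of_ne_zero hl⟩
  have hc0 : 0 < c := by rw [hc]; positivity
  rw [iteratedFDeriv_two_potential_zero hc]
  exact mul_pos (div_pos two_pos hc0) (add_pos_of_pos_of_nonneg hsq (sq_nonneg _))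

end LauricellaPotential

theorem stmt13 (m : ℕ) (hm : 2 ≤ m)
    (f : (Fin (m - 1) → ℝ) → ℝ)
    (hf : ∀ s, f s = (∑ l, s l) - m + 1 / (1 - ∑ l, 1 / (s l + m))) :
    f 0 = 0 ∧ fderiv ℝ f 0 = 0 ∧
      ∀ v : Fin (m - 1) → ℝ, v ≠ 0 →
        0 < iteratedFDeriv ℝ 2 f 0 (fun _ => v) := by
  have hc : (m : ℝ) = Fintype.card (Fin (m - 1)) + 1 := by
    rw [Fintype.card_fin, Nat.cast_sub (by omega)]
    ring
  obtain rfl : f = LauricellaPotential.potential (m : ℝ) := funext fun s => by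
    simp [hf, LauricellaPotential.potential, LauricellaPotential.denom, one_div]
  exact ⟨LauricellaPotential.potential_zero hc, LauricellaPotential.fderiv_potential_zero hc,
    fun _ hv => LauricellaPotential.iteratedFDeriv_two_potential_zero_pos hc hv⟩
end

section
/- Let m ≥ 1 and let γ₁,…,γ_m, α, β be nonzero complex numbers with γ_k ≠ 1 for all k and α ∉ {∏_{n∈N} γ_n : N ⊆ {1,…,m}}, β ∉ {∏_{n∈N} γ_n : N ⊆ {1,…,m}}. For I ⊆ {1,…,m} and k ∈ I define Δ'_I as the formal linear combination Δ'_I = αβ ∏_{j∉I} (γ_j−1)/γ_j · Σ_{N⊆I} [∏_{n∈N} γ_n / ((α−∏_{n∈N}γ_n)(β−∏_{n∈N}γ_n))] e_N in the free vector space with basis {e_N}_{N⊆{1,…,m}}. Let T_k be the linear map with T_k(e_N) = γ_k^{−1} e_N if k ∈ N and T_k(e_N) = e_N if k ∉ N. Then T_k(Δ'_I) = γ_k^{−1} Δ'_I + Δ'_{I∖{k}} if k ∈ I, and T_k(Δ'_I) = Δ'_I if k ∉ I. -/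
/-!
`T_k` acts diagonally on the basis, with eigenvalue `γ_k⁻¹` on `e_N` for `k ∈ N` and `1` otherwise.
If `k ∉ I`, every `N ⊆ I` avoids `k`, so the sum defining `Δ'_I` is fixed. If `k ∈ I`, split the
subsets of `I` into those avoiding `k` (the sum `A` over subsets of `I ∖ {k}`) and those containing
`k` (the rest `B`): then `T_k (A + B) = A + γ_k⁻¹ B = γ_k⁻¹ (A + B) + (1 - γ_k⁻¹) A`, and the factor
`1 - γ_k⁻¹ = (γ_k - 1)/γ_k` is exactly the extra factor in the prefactor of `Δ'_{I∖{k}}`.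
-/

open Finset

theorem Finset.prod_compl_erase {ι M : Type*} [Fintype ι] [DecidableEq ι] [CommMonoid M]
    {s : Finset ι} {a : ι} (ha : a ∈ s) (f : ι → M) :
    ∏ i ∈ (s.erase a)ᶜ, f i = f a * ∏ i ∈ sᶜ, f i := by
  rw [compl_erase, prod_insert (notMem_compl.mpr ha)]

section DiagonalOnPowerset

variable {ι R M : Type*} [DecidableEq ι] [CommRing R] [AddCommGroup M] [Module R M]
  {T : Module.End R M} {e : Finset ι → M} {k : ι} {g : R}

theorem map_sum_powerset_of_notMem
    (hT : ∀ N, T (e N) = (if k ∈ N then g else 1) • e N) (c : Finset ι → R)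
    {I : Finset ι} (hk : k ∉ I) :
    T (∑ N ∈ I.powerset, c N • e N) = ∑ N ∈ I.powerset, c N • e N := by
  rw [map_sum]
  refine sum_congr rfl fun N hN => ?_
  rw [map_smul, hT, if_neg fun hkN => hk (mem_powerset.mp hN hkN), one_smul]

theorem map_sum_powerset_of_mem
    (hT : ∀ N, T (e N) = (if k ∈ N then g else 1) • e N) (c : Finset ι → R)
    {I : Finset ι} (hk : k ∈ I) :
    T (∑ N ∈ I.powerset, c N • e N) =
      g • ∑ N ∈ I.powerset, c N • e N + (1 - g) • ∑ N ∈ (I.erase k).powerset, c N • e N := by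
  have hkJ : k ∉ I.erase k := notMem_erase k I
  have hT_insert : T (∑ N ∈ (I.erase k).powerset, c (insert k N) • e (insert k N)) =
      g • ∑ N ∈ (I.erase k).powerset, c (insert k N) • e (insert k N) := by
    simp only [map_sum, map_smul, hT, if_pos (mem_insert_self k _), smul_sum, smul_comm g]
  rw [← insert_erase hk, sum_powerset_insert hkJ, map_add, map_sum_powerset_of_notMem hT c hkJ,
    hT_insert, erase_insert hkJ]
  module

end DiagonalOnPowerset

theorem stmt15_general (m : ℕ) (α β : ℂ) (γ : Fin m → ℂ)
    (hγ0 : ∀ k, γ k ≠ 0)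
    (k : Fin m)
    (T : Module.End ℂ (Finset (Fin m) → ℂ))
    (hT : ∀ N : Finset (Fin m),
      T (Pi.single N 1) =
        (if k ∈ N then (γ k)⁻¹ else 1 : ℂ) •
          (Pi.single N 1 : Finset (Fin m) → ℂ))
    (Δ' : Finset (Fin m) → (Finset (Fin m) → ℂ))
    (hΔ : ∀ I : Finset (Fin m),
      Δ' I = (α * β * ∏ j ∈ Iᶜ, (γ j - 1) / γ j) •
        ∑ N ∈ I.powerset,
          ((∏ n ∈ N, γ n) /
            ((α - ∏ n ∈ N, γ n) * (β - ∏ n ∈ N, γ n))) •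
          (Pi.single N 1 : Finset (Fin m) → ℂ))
    (I : Finset (Fin m)) :
    (k ∈ I → T (Δ' I) = (γ k)⁻¹ • Δ' I + Δ' (I.erase k)) ∧
    (k ∉ I → T (Δ' I) = Δ' I) := by
  constructor
  · intro hk
    have hfactor : (γ k - 1) / γ k = 1 - (γ k)⁻¹ := by field_simp [hγ0 k]
    rw [hΔ I, hΔ (I.erase k), map_smul, map_sum_powerset_of_mem (e := (Pi.single · 1)) hT _ hk,
      prod_compl_erase hk, hfactor]
    module
  · intro hk
    rw [hΔ I, map_smul, map_sum_powerset_of_notMem (e := (Pi.single · 1)) hT _ hk]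

theorem stmt15 (m : ℕ) (hm : 1 ≤ m) (α β : ℂ) (γ : Fin m → ℂ)
    (hα0 : α ≠ 0) (hβ0 : β ≠ 0) (hγ0 : ∀ k, γ k ≠ 0)
    (hα : ∀ N : Finset (Fin m), α ≠ ∏ n ∈ N, γ n)
    (hβ : ∀ N : Finset (Fin m), β ≠ ∏ n ∈ N, γ n)
    (k : Fin m)
    (T : Module.End ℂ (Finset (Fin m) → ℂ))
    (hT : ∀ N : Finset (Fin m),
      T (Pi.single N 1) =
        (if k ∈ N then (γ k)⁻¹ else 1 : ℂ) •
          (Pi.single N 1 : Finset (Fin m) → ℂ))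
    (Δ' : Finset (Fin m) → (Finset (Fin m) → ℂ))
    (hΔ : ∀ I : Finset (Fin m),
      Δ' I = (α * β * ∏ j ∈ Iᶜ, (γ j - 1) / γ j) •
        ∑ N ∈ I.powerset,
          ((∏ n ∈ N, γ n) /
            ((α - ∏ n ∈ N, γ n) * (β - ∏ n ∈ N, γ n))) •
          (Pi.single N 1 : Finset (Fin m) → ℂ))
    (I : Finset (Fin m)) :
    (k ∈ I → T (Δ' I) = (γ k)⁻¹ • Δ' I + Δ' (I.erase k)) ∧
    (k ∉ I → T (Δ' I) = Δ' I) :=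
  stmt15_general m α β γ hγ0 k T hT Δ' hΔ I
end
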